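/- arXiv:1202.1930 — 3 statements merged into one kernel-verified Lean document; each statement's English description precedes it below -/
import Mathlib

section
/- If (φ_n) is a non-decreasing sequence of nonnegative supermartingale families indexed by stopping times (i.e., for each n and each stopping time θ, φ_n(θ) ≤ φ_{n+1}(θ) a.s.), then the family φ defined by φ(θ) := lim_n ↑ φ_n(θ) is a nonnegative supermartingale family. -/
open MeasureTheory Filter Set
open scoped ENNReal

variable {Ω : Type*}

/-- A stopping time of the filtration `F` with values in `[0, T]`. -/
structure StopT {m0 : MeasurableSpace Ω} (F : Filtration ℝ m0) (T : ℝ) where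
  t : Ω → ℝ
  isST : IsStoppingTime F (fun ω => (t ω : WithTop ℝ))
  mem : ∀ ω, t ω ∈ Set.Icc (0 : ℝ) T

variable {m0 : MeasurableSpace Ω} (F : Filtration ℝ m0) (T : ℝ) (μ : Measure Ω)

/-- An admissible family of `[0,∞]`-valued random variables indexed by stopping times. -/
def AdmissibleENN (φ : StopT F T → Ω → ℝ≥0∞) : Prop :=
  (∀ θ : StopT F T, Measurable[θ.isST.measurableSpace] (φ θ)) ∧
  ∀ θ θ' : StopT F T, ∀ᵐ ω ∂μ, θ.t ω = θ'.t ω → φ θ ω = φ θ' ω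

/-- `g` is (a version of) the conditional expectation of the nonnegative `f` with respect to `m`,
characterized by `m`-measurability and equality of the set integrals on `m`-measurable sets. -/
def IsLCondExp (m : MeasurableSpace Ω) (f g : Ω → ℝ≥0∞) : Prop :=
  Measurable[m] g ∧ ∀ s : Set Ω, MeasurableSet[m] s → ∫⁻ ω in s, g ω ∂μ = ∫⁻ ω in s, f ω ∂μ

/-- A nonnegative (`[0,∞]`-valued) supermartingale family:
`E[φ(θ) | F_{θ'}] ≤ φ(θ')` a.s. whenever `θ' ≤ θ` a.s. -/
def SupermartFamENN (φ : StopT F T → Ω → ℝ≥0∞) : Prop :=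
  AdmissibleENN F T μ φ ∧
  ∀ θ θ' : StopT F T, (∀ᵐ ω ∂μ, θ'.t ω ≤ θ.t ω) →
    ∃ g : Ω → ℝ≥0∞, IsLCondExp μ θ'.isST.measurableSpace (φ θ) g ∧ g ≤ᵐ[μ] φ θ'

/-!
Admissibility and the supermartingale inequality pass to the pointwise supremum directly. The
content is that if `gₙ` is a conditional expectation of `φₙ(θ)` given `F_θ'`, then `⨆ n, gₙ` is one
of `⨆ n, φₙ(θ)`. Monotone convergence gives the lower bound on set integrals. For the upper bound,
the measure is arbitrary, so conditional expectations are not a.e. unique and the `gₙ` need not be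
monotone; one passes instead through the running maxima `g₀ ⊔ ⋯ ⊔ g_N`, whose set integrals are
still dominated by those of `⨆ n, φₙ(θ)`: split each set along `{g ≤ h}` to bound `∫ g ⊔ h`.
-/

section

variable {F T μ} {m : MeasurableSpace Ω} {f g h : Ω → ℝ≥0∞}

theorem setLIntegral_sup_le (hm : m ≤ m0) (hg : Measurable[m] g) (hh : Measurable[m] h)
    (hgf : ∀ s, MeasurableSet[m] s → ∫⁻ ω in s, g ω ∂μ ≤ ∫⁻ ω in s, f ω ∂μ)
    (hhf : ∀ s, MeasurableSet[m] s → ∫⁻ ω in s, h ω ∂μ ≤ ∫⁻ ω in s, f ω ∂μ)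
    {s : Set Ω} (hs : MeasurableSet[m] s) :
    ∫⁻ ω in s, (g ⊔ h) ω ∂μ ≤ ∫⁻ ω in s, f ω ∂μ := by
  set t := {ω | g ω ≤ h ω}
  have ht : MeasurableSet[m] t := measurableSet_le hg hh
  have h_on_t : ∫⁻ ω in s ∩ t, (g ⊔ h) ω ∂μ = ∫⁻ ω in s ∩ t, h ω ∂μ :=
    setLIntegral_congr_fun (hm _ (hs.inter ht)) fun ω hω => sup_eq_right.2 hω.2
  have g_off_t : ∫⁻ ω in s \ t, (g ⊔ h) ω ∂μ = ∫⁻ ω in s \ t, g ω ∂μ :=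
    setLIntegral_congr_fun (hm _ (hs.diff ht)) fun ω hω => sup_eq_left.2 (le_of_not_ge hω.2)
  calc ∫⁻ ω in s, (g ⊔ h) ω ∂μ
      = ∫⁻ ω in s ∩ t, h ω ∂μ + ∫⁻ ω in s \ t, g ω ∂μ := by
        rw [← lintegral_inter_add_sdiff _ s (hm t ht), h_on_t, g_off_t]
    _ ≤ ∫⁻ ω in s ∩ t, f ω ∂μ + ∫⁻ ω in s \ t, f ω ∂μ :=
        add_le_add (hhf _ (hs.inter ht)) (hgf _ (hs.diff ht))
    _ = ∫⁻ ω in s, f ω ∂μ := lintegral_inter_add_sdiff _ s (hm t ht)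

theorem measurable_partialSups {g : ℕ → Ω → ℝ≥0∞} (hg : ∀ n, Measurable[m] (g n)) (N : ℕ) :
    Measurable[m] (partialSups g N) := by
  induction N with
  | zero => simpa using hg 0
  | succ N ih => simpa using ih.sup (hg (N + 1))

theorem setLIntegral_partialSups_le (hm : m ≤ m0) {g : ℕ → Ω → ℝ≥0∞}
    (hg : ∀ n, Measurable[m] (g n))
    (hgf : ∀ n s, MeasurableSet[m] s → ∫⁻ ω in s, g n ω ∂μ ≤ ∫⁻ ω in s, f ω ∂μ)
    (N : ℕ) {s : Set Ω} (hs : MeasurableSet[m] s) :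
    ∫⁻ ω in s, partialSups g N ω ∂μ ≤ ∫⁻ ω in s, f ω ∂μ := by
  induction N generalizing s with
  | zero => simpa using hgf 0 s hs
  | succ N ih =>
    rw [partialSups_add_one]
    exact setLIntegral_sup_le hm (measurable_partialSups hg N) (hg (N + 1)) (fun _ => ih)
      (hgf (N + 1)) hs

theorem setLIntegral_iSup_le (hm : m ≤ m0) {g : ℕ → Ω → ℝ≥0∞}
    (hg : ∀ n, Measurable[m] (g n))
    (hgf : ∀ n s, MeasurableSet[m] s → ∫⁻ ω in s, g n ω ∂μ ≤ ∫⁻ ω in s, f ω ∂μ)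
    {s : Set Ω} (hs : MeasurableSet[m] s) :
    ∫⁻ ω in s, ⨆ n, g n ω ∂μ ≤ ∫⁻ ω in s, f ω ∂μ := by
  have h_eq : (fun ω => ⨆ n, g n ω) = fun ω => ⨆ N, partialSups g N ω := by
    ext ω
    rw [← iSup_apply, ← iSup_partialSups_eq, iSup_apply]
  rw [h_eq, lintegral_iSup (fun N => (measurable_partialSups hg N).mono hm le_rfl)
    (partialSups_monotone g)]
  exact iSup_le fun N => setLIntegral_partialSups_le hm hg hgf N hs

theorem IsLCondExp.iSup (hm : m ≤ m0) {φ g : ℕ → Ω → ℝ≥0∞} (hφ : ∀ n, Measurable[m0] (φ n))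
    (hφ_mono : ∀ᵐ ω ∂μ, Monotone fun n => φ n ω) (hg : ∀ n, IsLCondExp μ m (φ n) (g n)) :
    IsLCondExp μ m (fun ω => ⨆ n, φ n ω) (fun ω => ⨆ n, g n ω) := by
  refine ⟨Measurable.iSup fun n => (hg n).1, fun s hs => le_antisymm ?_ ?_⟩
  · refine setLIntegral_iSup_le hm (fun n => (hg n).1) (fun n s hs => ?_) hs
    rw [(hg n).2 s hs]
    exact lintegral_mono fun ω => le_iSup (fun k => φ k ω) n
  · rw [lintegral_iSup' (μ := μ.restrict s) (fun n => (hφ n).aemeasurable)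
      (ae_restrict_of_ae hφ_mono)]
    refine iSup_le fun n => ?_
    rw [← (hg n).2 s hs]
    exact lintegral_mono fun ω => le_iSup (fun k => g k ω) n

theorem AdmissibleENN.iSup {φ : ℕ → StopT F T → Ω → ℝ≥0∞} (hφ : ∀ n, AdmissibleENN F T μ (φ n)) :
    AdmissibleENN F T μ fun θ ω => ⨆ n, φ n θ ω := by
  refine ⟨fun θ => Measurable.iSup fun n => (hφ n).1 θ, fun θ θ' => ?_⟩
  filter_upwards [ae_all_iff.2 fun n => (hφ n).2 θ θ'] with ω hω heq
  exact iSup_congr fun n => hω n heq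

end

/-- The increasing limit of a nondecreasing sequence of nonnegative supermartingale
families is a nonnegative supermartingale family. -/
theorem limit_of_nondecreasing_supermartingale_families
    (φn : ℕ → StopT F T → Ω → ℝ≥0∞)
    (hsm : ∀ n, SupermartFamENN F T μ (φn n))
    (hmono : ∀ n (θ : StopT F T), ∀ᵐ ω ∂μ, φn n θ ω ≤ φn (n + 1) θ ω) :
    SupermartFamENN F T μ (fun θ ω => ⨆ n, φn n θ ω) := by
  refine ⟨AdmissibleENN.iSup fun n => (hsm n).1, fun θ θ' hle => ?_⟩
  choose g hg hg_le using fun n => (hsm n).2 θ θ' hle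
  have hφ_mono : ∀ᵐ ω ∂μ, Monotone fun n => φn n θ ω := by
    filter_upwards [ae_all_iff.2 fun n => hmono n θ] with ω hω
    exact monotone_nat_of_le_succ hω
  have hφ_meas n : Measurable (φn n θ) := ((hsm n).1.1 θ).mono θ.isST.measurableSpace_le le_rfl
  refine ⟨fun ω => ⨆ n, g n ω, IsLCondExp.iSup θ'.isST.measurableSpace_le hφ_meas hφ_mono hg, ?_⟩
  filter_upwards [ae_all_iff.2 hg_le] with ω hω
  exact iSup_mono hω
end

section
/- If J(0) < +∞, then the admissible family Y := J − J' satisfies ξ ≤ Y ≤ ζ; in particular ξ(θ) ≤ ζ(θ) a.s. for every stopping time θ. Hence if there exists a stopping time ν with P(ξ(ν) > ζ(ν)) > 0, then J(0) = J'(0) = +∞. -/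
/-!
Taking `τ = θ` in the essential suprema `J = R(J' + ξ)` and `J' = R(J − ζ)` gives
`J' + ξ ≤ J` and `J − ζ ≤ J'`, since a conditional expectation of an `F_θ`-measurable variable
cannot lie below it. Once `J` is finite, these two inequalities are exactly `ξ ≤ J − J' ≤ ζ`.
Finiteness spreads from `J(0)` to every `J(θ)`: `J(0)` dominates `E[J(θ) | F_0]`, and on the
trivial σ-algebra `F_0` an a.s. finite variable is a.s. bounded by a constant, so `J(θ)⁺` has
finite integral. Conversely, if `ξ(ν) > ζ(ν)` with positive probability then `J(0)` is not a.s.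
finite, hence `+∞` a.s. by the 0-1 law on `F_0`; and so is `J'(0)`, as `J(0) ≤ J'(0) + ζ(0)`.
-/

open MeasureTheory Filter Set
open scoped ENNReal

variable {Ω : Type*}

variable {m0 : MeasurableSpace Ω} (F : Filtration ℝ m0) (T : ℝ) (μ : Measure Ω)

/-- An admissible family of real-valued random variables indexed by stopping times. -/
def AdmissibleR (φ : StopT F T → Ω → ℝ) : Prop :=
  (∀ θ : StopT F T, StronglyMeasurable[θ.isST.measurableSpace] (φ θ)) ∧
  ∀ θ θ' : StopT F T, ∀ᵐ ω ∂μ, θ.t ω = θ'.t ω → φ θ ω = φ θ' ω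

/-- The integrability condition `E[ess sup_θ φ(θ)⁻] < ∞`: the negative parts are dominated
a.s. by a single integrable random variable. -/
def IntegCondNeg (φ : StopT F T → Ω → ℝ) : Prop :=
  ∃ g : Ω → ℝ, Integrable g μ ∧ ∀ θ : StopT F T, ∀ᵐ ω ∂μ, max (-(φ θ ω)) 0 ≤ g ω

/-- The integrability condition `E[ess sup_θ φ(θ)⁺] < ∞`. -/
def IntegCondPos (φ : StopT F T → Ω → ℝ) : Prop :=
  ∃ g : Ω → ℝ, Integrable g μ ∧ ∀ θ : StopT F T, ∀ᵐ ω ∂μ, max (φ θ ω) 0 ≤ g ω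

/-- The positive part of an extended real, as an element of `[0,∞]`. -/
noncomputable def erealPos (x : EReal) : ℝ≥0∞ :=
  if x = ⊤ then ⊤ else ENNReal.ofReal x.toReal

/-- An admissible family of extended-real-valued random variables indexed by stopping times. -/
def AdmissibleER (φ : StopT F T → Ω → EReal) : Prop :=
  (∀ θ : StopT F T, Measurable[θ.isST.measurableSpace] (φ θ)) ∧
  ∀ θ θ' : StopT F T, ∀ᵐ ω ∂μ, θ.t ω = θ'.t ω → φ θ ω = φ θ' ω

/-- `g` is (a version of) the (generalized) conditional expectation of the extended-real-valued
`f` (whose negative part is integrable) with respect to `m`: `g` is `m`-measurable, has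
integrable negative part, and `∫_s f = ∫_s g` for every `m`-measurable set `s`
(the equality of the integrals being written with the positive and negative parts separated). -/
def IsCondExpER (m : MeasurableSpace Ω) (f g : Ω → EReal) : Prop :=
  Measurable[m] g ∧
  Integrable (fun ω => (erealPos (-f ω)).toReal) μ ∧
  Integrable (fun ω => (erealPos (-g ω)).toReal) μ ∧
  ∀ s : Set Ω, MeasurableSet[m] s →
    (∫⁻ ω in s, erealPos (f ω) ∂μ) + ENNReal.ofReal (∫ ω in s, (erealPos (-g ω)).toReal ∂μ)
      = (∫⁻ ω in s, erealPos (g ω) ∂μ) + ENNReal.ofReal (∫ ω in s, (erealPos (-f ω)).toReal ∂μ)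

/-- `g` is the essential supremum of the family `(f i)`. -/
def IsEssSupFamER {ι : Sort*} (f : ι → Ω → EReal) (g : Ω → EReal) : Prop :=
  AEMeasurable g μ ∧ (∀ i, f i ≤ᵐ[μ] g) ∧
  ∀ h : Ω → EReal, AEMeasurable h μ → (∀ i, f i ≤ᵐ[μ] h) → g ≤ᵐ[μ] h

/-- The stopping times that are a.s. greater than or equal to `θ` (the set `T_θ`). -/
def After (θ : StopT F T) : Type _ :=
  {τ : StopT F T // ∀ᵐ ω ∂μ, θ.t ω ≤ τ.t ω}

/-- A (possibly `+∞`-valued) supermartingale family in the extended reals. -/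
def SupermartFamER (φ : StopT F T → Ω → EReal) : Prop :=
  AdmissibleER F T μ φ ∧
  ∀ θ θ' : StopT F T, (∀ᵐ ω ∂μ, θ'.t ω ≤ θ.t ω) →
    ∃ g : Ω → EReal, IsCondExpER μ θ'.isST.measurableSpace (φ θ) g ∧ g ≤ᵐ[μ] φ θ'

/-- `J`, `J'` are nonnegative supermartingale families solving the system
`J = R(J' + ξ)`, `J' = R(J − ζ)` (extended-real-valued version). -/
def SnellFixER (ξ ζ : StopT F T → Ω → ℝ) (J J' : StopT F T → Ω → EReal) : Prop :=
  SupermartFamER F T μ J ∧ SupermartFamER F T μ J' ∧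
  (∀ θ : StopT F T, ∀ᵐ ω ∂μ, 0 ≤ J θ ω) ∧ (∀ θ : StopT F T, ∀ᵐ ω ∂μ, 0 ≤ J' θ ω) ∧
  (∀ θ : StopT F T, ∃ C : After F T μ θ → Ω → EReal,
      (∀ τ : After F T μ θ, IsCondExpER μ θ.isST.measurableSpace
          (fun ω => J' τ.1 ω + (ξ τ.1 ω : EReal)) (C τ)) ∧
      IsEssSupFamER μ C (J θ)) ∧
  (∀ θ : StopT F T, ∃ C : After F T μ θ → Ω → EReal,
      (∀ σ : After F T μ θ, IsCondExpER μ θ.isST.measurableSpace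
          (fun ω => J σ.1 ω - (ζ σ.1 ω : EReal)) (C σ)) ∧
      IsEssSupFamER μ C (J' θ))


section ERealPos

@[simp] lemma erealPos_top : erealPos ⊤ = ⊤ := if_pos rfl

@[simp] lemma erealPos_bot : erealPos ⊥ = 0 := by simp [erealPos]

@[simp] lemma erealPos_coe (c : ℝ) : erealPos c = ENNReal.ofReal c := by simp [erealPos]

lemma measurable_erealPos : Measurable erealPos :=
  Measurable.ite (measurableSet_singleton _) measurable_const
    (ENNReal.measurable_ofReal.comp measurable_ereal_toReal)

lemma erealPos_mono : Monotone erealPos := by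
  intro x y h
  induction x <;> induction y <;> simp_all [ENNReal.ofReal_le_ofReal]

lemma erealPos_eq_top_iff {x : EReal} : erealPos x = ⊤ ↔ x = ⊤ := by
  induction x <;> simp

lemma erealPos_eq_zero_of_nonpos {x : EReal} (h : x ≤ 0) : erealPos x = 0 := by
  simpa [erealPos] using erealPos_mono h

end ERealPos

namespace EReal

lemma eq_top_of_forall_nat_lt {x : EReal} (h : ∀ n : ℕ, ((n : ℝ) : EReal) < x) : x = ⊤ := by
  refine (eq_top_iff_forall_lt x).2 fun y => ?_
  obtain ⟨n, hn⟩ := exists_nat_gt y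
  exact (EReal.coe_lt_coe_iff.2 hn).trans (h n)

lemma coe_le_sub_and_sub_le_coe {x y : EReal} {a b : ℝ} (hx : x ≠ ⊥) (hx' : x ≠ ⊤)
    (h₁ : y + a ≤ x) (h₂ : x - b ≤ y) : (a : EReal) ≤ x - y ∧ x - y ≤ b := by
  have hy' : y ≠ ⊤ := by
    rintro rfl
    exact hx' (top_le_iff.1 (by simpa using h₁))
  have hy : y ≠ ⊥ := by
    rintro rfl
    exact hx (by simpa [sub_eq_add_neg, ← EReal.coe_neg, EReal.add_eq_bot_iff] using h₂)
  lift x to ℝ using ⟨hx', hx⟩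
  lift y to ℝ using ⟨hy', hy⟩
  norm_cast at h₁ h₂ ⊢
  constructor <;> linarith

lemma ne_top_of_sub_coe_le {x y : EReal} {b : ℝ} (h : x - b ≤ y) (hy : y ≠ ⊤) : x ≠ ⊤ := by
  rintro rfl
  exact hy (top_le_iff.1 (by simpa using h))

end EReal

section CondExp

variable {μ} {m : MeasurableSpace Ω} {f g : Ω → EReal}

lemma IsCondExpER.measure_le_inter_le_eq_zero [IsFiniteMeasure μ] (hm : m ≤ m0)
    (hf : Measurable[m] f) (h : IsCondExpER μ m f g) {q r : ℝ} (hq : 0 ≤ q) (hqr : q < r) :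
    μ ({ω | g ω ≤ q} ∩ {ω | (r : EReal) ≤ f ω}) = 0 := by
  set s := {ω | g ω ≤ q} ∩ {ω | (r : EReal) ≤ f ω}
  have hsm : MeasurableSet[m] s :=
    (measurableSet_le h.1 measurable_const).inter (measurableSet_le measurable_const hf)
  have hs : MeasurableSet[m0] s := hm s hsm
  have hr : 0 < r := hq.trans_lt hqr
  have hf_neg : ∫ ω in s, (erealPos (-f ω)).toReal ∂μ = 0 := by
    refine setIntegral_eq_zero_of_forall_eq_zero fun ω hω => ?_
    rw [erealPos_eq_zero_of_nonpos, ENNReal.toReal_zero]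
    exact EReal.neg_le_zero.2 ((EReal.coe_nonneg.2 hr.le).trans hω.2)
  have lower : ENNReal.ofReal r * μ s ≤ ∫⁻ ω in s, erealPos (f ω) ∂μ := by
    rw [← setLIntegral_const]
    exact setLIntegral_mono' hs fun ω hω => by simpa using erealPos_mono hω.2
  have upper : ∫⁻ ω in s, erealPos (g ω) ∂μ ≤ ENNReal.ofReal q * μ s := by
    rw [← setLIntegral_const]
    exact setLIntegral_mono' hs fun ω hω => by simpa using erealPos_mono hω.1
  have key : ENNReal.ofReal r * μ s ≤ ENNReal.ofReal q * μ s :=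
    calc ENNReal.ofReal r * μ s
        ≤ (∫⁻ ω in s, erealPos (f ω) ∂μ)
          + ENNReal.ofReal (∫ ω in s, (erealPos (-g ω)).toReal ∂μ) := lower.trans le_self_add
      _ = (∫⁻ ω in s, erealPos (g ω) ∂μ)
          + ENNReal.ofReal (∫ ω in s, (erealPos (-f ω)).toReal ∂μ) := h.2.2.2 s hsm
      _ ≤ ENNReal.ofReal q * μ s := by rwa [hf_neg, ENNReal.ofReal_zero, add_zero]
  by_contra hne
  exact key.not_gt (ENNReal.mul_lt_mul_left hne (measure_ne_top μ s)
    ((ENNReal.ofReal_lt_ofReal_iff hr).2 hqr))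

/-- `IsCondExpER` does not rule out `g = ⊥` on a non-null set (`(erealPos (-⊥)).toReal = 0`);
bounding by `max g 0` sidesteps that case. -/
lemma IsCondExpER.ae_le_max_zero [IsFiniteMeasure μ] (hm : m ≤ m0) (hf : Measurable[m] f)
    (h : IsCondExpER μ m f g) : ∀ᵐ ω ∂μ, f ω ≤ max (g ω) 0 := by
  have hnull : ∀ᵐ ω ∂μ, ∀ q r : ℚ, 0 ≤ q → q < r →
      ¬ (g ω ≤ (q : ℝ) ∧ ((r : ℝ) : EReal) ≤ f ω) := by
    refine ae_all_iff.2 fun q => ae_all_iff.2 fun r => ?_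
    by_cases hqr : 0 ≤ q ∧ q < r
    · filter_upwards [measure_eq_zero_iff_ae_notMem.1 (h.measure_le_inter_le_eq_zero hm hf
        (q := q) (r := r) (by exact_mod_cast hqr.1) (by exact_mod_cast hqr.2))]
        with ω hω _ _ hmem using hω hmem
    · exact ae_of_all _ fun ω hq hr => absurd ⟨hq, hr⟩ hqr
  filter_upwards [hnull] with ω hω
  by_contra! hlt
  obtain ⟨q, hgq, hqf⟩ := EReal.exists_rat_btwn_of_lt hlt
  obtain ⟨r, hqr, hrf⟩ := EReal.exists_rat_btwn_of_lt hqf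
  exact hω q r (by exact_mod_cast (le_max_right _ _).trans hgq.le) (by exact_mod_cast hqr)
    ⟨(le_max_left _ _).trans hgq.le, hrf.le⟩

lemma IsEssSupFamER.ae_le_of_isCondExpER {ι : Sort*} [IsFiniteMeasure μ] (hm : m ≤ m0)
    {C : ι → Ω → EReal} (hsup : IsEssSupFamER μ C g) (hg : ∀ᵐ ω ∂μ, 0 ≤ g ω) (i : ι)
    (hf : Measurable[m] f) (hC : IsCondExpER μ m f (C i)) : ∀ᵐ ω ∂μ, f ω ≤ g ω := by
  filter_upwards [hC.ae_le_max_zero hm hf, hsup.2.1 i, hg] with ω h₁ h₂ h₃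
  exact h₁.trans (max_le h₂ h₃)

lemma IsCondExpER.ae_lt_top [IsFiniteMeasure μ] (hf : Measurable[m0] f) (h : IsCondExpER μ m f g)
    {c : ℝ} (hgc : ∀ᵐ ω ∂μ, g ω ≤ c) : ∀ᵐ ω ∂μ, f ω < ⊤ := by
  have hg_pos : ∫⁻ ω, erealPos (g ω) ∂μ < ⊤ :=
    calc ∫⁻ ω, erealPos (g ω) ∂μ ≤ ∫⁻ _, ENNReal.ofReal c ∂μ :=
          lintegral_mono_ae (hgc.mono fun ω hω => by simpa using erealPos_mono hω)
      _ < ⊤ := by simp [lintegral_const, ENNReal.mul_lt_top, measure_lt_top]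
  have hid := h.2.2.2 univ MeasurableSet.univ
  simp only [Measure.restrict_univ] at hid
  have hf_pos : ∫⁻ ω, erealPos (f ω) ∂μ ≠ ⊤ :=
    (le_self_add.trans_lt (hid.trans_lt (ENNReal.add_lt_top.2 ⟨hg_pos, ENNReal.ofReal_lt_top⟩))).ne
  filter_upwards [MeasureTheory.ae_lt_top (measurable_erealPos.comp hf) hf_pos] with ω hω
  exact lt_top_iff_ne_top.2 fun htop => hω.ne (erealPos_eq_top_iff.2 htop)

end CondExp

section ZeroOne

variable {μ} {m : MeasurableSpace Ω}

lemma ae_or_ae_not_of_zero_one [IsFiniteMeasure μ] (hm : m ≤ m0)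
    (h01 : ∀ s, MeasurableSet[m] s → μ s = 0 ∨ μ s = 1) {p : Ω → Prop}
    (hp : MeasurableSet[m] {ω | p ω}) : (∀ᵐ ω ∂μ, ¬ p ω) ∨ ∀ᵐ ω ∂μ, p ω := by
  rcases h01 _ hp with h | h
  · exact Or.inl (measure_eq_zero_iff_ae_notMem.1 h)
  rcases h01 _ MeasurableSet.univ with huniv | huniv
  · exact Or.inr (by simp [Measure.measure_univ_eq_zero.1 huniv])
  · exact Or.inr ((ae_iff_measure_eq (hm _ hp).nullMeasurableSet).2 (h.trans huniv.symm))

lemma exists_ae_le_of_zero_one [IsFiniteMeasure μ] (hm : m ≤ m0)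
    (h01 : ∀ s, MeasurableSet[m] s → μ s = 0 ∨ μ s = 1) {g : Ω → EReal} (hg : Measurable[m] g)
    (hlt : ∀ᵐ ω ∂μ, g ω < ⊤) : ∃ c : ℝ, ∀ᵐ ω ∂μ, g ω ≤ c := by
  by_contra hno
  have hgt : ∀ n : ℕ, ∀ᵐ ω ∂μ, ((n : ℝ) : EReal) < g ω := fun n =>
    (ae_or_ae_not_of_zero_one hm h01 (measurableSet_lt measurable_const hg)).resolve_left
      fun h => hno ⟨n, h.mono fun _ hω => not_lt.1 hω⟩
  have hfalse : ∀ᵐ ω ∂μ, False := by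
    filter_upwards [ae_all_iff.2 hgt, hlt] with ω hω htop
    exact htop.ne (EReal.eq_top_of_forall_nat_lt hω)
  exact hno ⟨0, hfalse.mono fun _ => False.elim⟩

end ZeroOne

section Families

variable {F T μ}

lemma StopT.measurableSpace_le_of_eq_zero {θ : StopT F T} (hθ : ∀ ω, θ.t ω = 0) :
    θ.isST.measurableSpace ≤ F 0 := by
  intro s hs
  have h0 := ((θ.isST.measurableSet s).1 hs).2 0
  have hs0 : s ∩ {ω | ((θ.t ω : ℝ) : WithTop ℝ) ≤ ((0 : ℝ) : WithTop ℝ)} = s := by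
    ext ω; simp [hθ ω]
  rwa [hs0] at h0

lemma SupermartFamER.ae_lt_top_of_zero_one [IsFiniteMeasure μ] {φ : StopT F T → Ω → EReal}
    (hφ : SupermartFamER F T μ φ) {θ θ' : StopT F T} (hle : ∀ᵐ ω ∂μ, θ'.t ω ≤ θ.t ω)
    (h01 : ∀ s, MeasurableSet[θ'.isST.measurableSpace] s → μ s = 0 ∨ μ s = 1)
    (hfin : ∀ᵐ ω ∂μ, φ θ' ω < ⊤) : ∀ᵐ ω ∂μ, φ θ ω < ⊤ := by
  obtain ⟨g, hg, hgφ⟩ := hφ.2 θ θ' hle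
  obtain ⟨c, hc⟩ := exists_ae_le_of_zero_one θ'.isST.measurableSpace_le h01 hg.1
    (by filter_upwards [hgφ, hfin] with ω h₁ h₂ using h₁.trans_lt h₂)
  exact hg.ae_lt_top ((hφ.1.1 θ).mono θ.isST.measurableSpace_le le_rfl) hc

variable [IsFiniteMeasure μ] {ξ ζ : StopT F T → Ω → ℝ} {J J' : StopT F T → Ω → EReal}

lemma SnellFixER.ae_add_le (hfix : SnellFixER F T μ ξ ζ J J') (hξ : AdmissibleR F T μ ξ)
    (θ : StopT F T) : ∀ᵐ ω ∂μ, J' θ ω + ξ θ ω ≤ J θ ω := by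
  obtain ⟨C, hC, hsup⟩ := hfix.2.2.2.2.1 θ
  let τ : After F T μ θ := ⟨θ, ae_of_all _ fun _ => le_rfl⟩
  exact hsup.ae_le_of_isCondExpER θ.isST.measurableSpace_le (hfix.2.2.1 θ) τ
    ((hfix.2.1.1.1 θ).add (measurable_coe_real_ereal.comp (hξ.1 θ).measurable)) (hC τ)

lemma SnellFixER.ae_sub_le (hfix : SnellFixER F T μ ξ ζ J J') (hζ : AdmissibleR F T μ ζ)
    (θ : StopT F T) : ∀ᵐ ω ∂μ, J θ ω - ζ θ ω ≤ J' θ ω := by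
  obtain ⟨C, hC, hsup⟩ := hfix.2.2.2.2.2 θ
  let τ : After F T μ θ := ⟨θ, ae_of_all _ fun _ => le_rfl⟩
  refine hsup.ae_le_of_isCondExpER θ.isST.measurableSpace_le (hfix.2.2.2.1 θ) τ ?_ (hC τ)
  simp_rw [sub_eq_add_neg, ← EReal.coe_neg]
  exact (hfix.1.1.1 θ).add (measurable_coe_real_ereal.comp (hζ.1 θ).measurable.neg)

end Families

theorem between_rewards_of_finite
    (ξ ζ : StopT F T → Ω → ℝ)
    (hξadm : AdmissibleR F T μ ξ) (hζadm : AdmissibleR F T μ ζ)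
    (J J' : StopT F T → Ω → EReal)
    (hfix : SnellFixER F T μ ξ ζ J J')
    (θ0 : StopT F T) (hθ0 : ∀ ω, θ0.t ω = 0)
    (htriv : ∀ s : Set Ω, MeasurableSet[F 0] s → μ s = 0 ∨ μ s = 1) :
    ((∀ᵐ ω ∂μ, J θ0 ω < ⊤) →
      (∀ θ : StopT F T, ∀ᵐ ω ∂μ,
        (ξ θ ω : EReal) ≤ J θ ω - J' θ ω ∧ J θ ω - J' θ ω ≤ (ζ θ ω : EReal)) ∧
      (∀ θ : StopT F T, ∀ᵐ ω ∂μ, ξ θ ω ≤ ζ θ ω)) ∧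
    ((∃ ν : StopT F T, μ {ω | ζ ν ω < ξ ν ω} ≠ 0) →
      (∀ᵐ ω ∂μ, J θ0 ω = ⊤) ∧ (∀ᵐ ω ∂μ, J' θ0 ω = ⊤)) := by
  have : IsFiniteMeasure μ := ⟨by rcases htriv _ MeasurableSet.univ with h | h <;> simp [h]⟩
  have h01 (s : Set Ω) (hs : MeasurableSet[θ0.isST.measurableSpace] s) : μ s = 0 ∨ μ s = 1 :=
    htriv s (StopT.measurableSpace_le_of_eq_zero hθ0 s hs)
  have between (hfin : ∀ᵐ ω ∂μ, J θ0 ω < ⊤) (θ : StopT F T) : ∀ᵐ ω ∂μ,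
      (ξ θ ω : EReal) ≤ J θ ω - J' θ ω ∧ J θ ω - J' θ ω ≤ (ζ θ ω : EReal) := by
    have hfinθ := hfix.1.ae_lt_top_of_zero_one (ae_of_all _ fun ω => hθ0 ω ▸ (θ.mem ω).1) h01 hfin
    filter_upwards [hfix.ae_add_le hξadm θ, hfix.ae_sub_le hζadm θ, hfix.2.2.1 θ, hfinθ]
      with ω h₁ h₂ h₃ h₄
    exact EReal.coe_le_sub_and_sub_le_coe (ne_bot_of_le_ne_bot EReal.zero_ne_bot h₃) h₄.ne h₁ h₂
  have reward_le (hfin : ∀ᵐ ω ∂μ, J θ0 ω < ⊤) (θ : StopT F T) : ∀ᵐ ω ∂μ, ξ θ ω ≤ ζ θ ω :=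
    (between hfin θ).mono fun _ h => EReal.coe_le_coe_iff.1 (h.1.trans h.2)
  refine ⟨fun hfin => ⟨between hfin, reward_le hfin⟩, fun ⟨ν, hν⟩ => ?_⟩
  have hJ_not_fin : ¬ ∀ᵐ ω ∂μ, J θ0 ω < ⊤ := fun hfin =>
    hν (by simpa using ae_iff.1 (reward_le hfin ν))
  have hJ'_not_fin : ¬ ∀ᵐ ω ∂μ, J' θ0 ω ≠ ⊤ := fun hfin' => hJ_not_fin <| by
    filter_upwards [hfin', hfix.ae_sub_le hζadm θ0] with ω h₁ h₂
    exact lt_top_iff_ne_top.2 (EReal.ne_top_of_sub_coe_le h₂ h₁)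
  have zero_one {p : Ω → Prop} (hp : MeasurableSet[θ0.isST.measurableSpace] {ω | p ω}) :=
    ae_or_ae_not_of_zero_one θ0.isST.measurableSpace_le h01 hp
  exact ⟨(zero_one (hfix.1.1.1 θ0 (measurableSet_singleton ⊤))).resolve_left
      fun h => hJ_not_fin (h.mono fun _ => lt_top_iff_ne_top.2),
    (zero_one (hfix.2.1.1.1 θ0 (measurableSet_singleton ⊤))).resolve_left hJ'_not_fin⟩
end

section
/- Let ξ, ζ be admissible families and suppose that for each predictable stopping time τ with τ > 0 a.s., the event {ξ(τ) = ζ(τ)} is a.s. empty. Then for every stopping time θ and every non-decreasing sequence of stopping times (θ_n) with θ_n ↑ θ, one has {ξ(θ) = ζ(θ)} ∩ {θ_n < θ for all n} = ∅ a.s. -/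
open MeasureTheory Filter Set
open scoped ENNReal

variable {Ω : Type*}

variable {m0 : MeasurableSpace Ω} (F : Filtration ℝ m0) (T : ℝ) (μ : Measure Ω)

/-- `τ` is a predictable stopping time: it is announced (strictly, monotonically) by a
sequence of stopping times everywhere on `Ω`. -/
def PredictableStop (τ : StopT F T) : Prop :=
  ∃ Sn : ℕ → StopT F T,
    (∀ n ω, (Sn n).t ω ≤ (Sn (n + 1)).t ω) ∧ (∀ n ω, (Sn n).t ω < τ.t ω) ∧
    ∀ ω, Tendsto (fun n => (Sn n).t ω) atTop (nhds (τ.t ω))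

/-! On `A = {θₙ < θ for all n}` the time `θ` agrees with `τ := θ_A`, equal to `θ` on `A` and to
`T` off `A`. This `τ` is positive and predictable: with `θₙ'` equal to `θₙ` on `{θₙ < θ}` and to
`T` elsewhere, the times `min θₙ' cₙ`, for constants `cₙ ↑ T`, announce it, because a
nondecreasing sequence that reaches `θ` stays there. By admissibility `ξ(θ) = ξ(τ)` and
`ζ(θ) = ζ(τ)` a.s. on `A`, so `{ξ(θ) = ζ(θ)} ∩ A ⊆ {ξ(τ) = ζ(τ)}`, a null set by hypothesis. -/

namespace MeasureTheory.IsStoppingTime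

variable {ι : Type*} [LinearOrder ι] {f : Filtration ι m0} {τ : Ω → WithTop ι} {c : WithTop ι}
  {s : Set Ω} [DecidablePred (· ∈ s)]

theorem ite_const_of_le (hτ : IsStoppingTime f τ) (hs : MeasurableSet[hτ.measurableSpace] s)
    (hτc : ∀ ω, τ ω ≤ c) : IsStoppingTime f fun ω => if ω ∈ s then τ ω else c := by
  intro i
  by_cases hci : c ≤ i
  · convert MeasurableSet.univ (m := f i)
    ext ω
    simp only [Set.mem_ofPred_eq, Set.mem_univ, iff_true]
    split_ifs
    exacts [(hτc ω).trans hci, hci]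
  · convert (hτ.measurableSet s).mp hs |>.2 i using 1
    ext ω
    simp only [Set.mem_ofPred_eq, Set.mem_inter_iff]
    split_ifs with hω <;> simp [hω, hci]

end MeasureTheory.IsStoppingTime

namespace StopT

variable {F T}

theorem measurableSet_lt (σ τ : StopT F T) :
    MeasurableSet[σ.isST.measurableSpace] {ω | σ.t ω < τ.t ω} := by
  simpa only [Set.compl_ofPred, not_le, WithTop.coe_le_coe]
    using (IsStoppingTime.measurableSet_stopping_time_le τ.isST σ.isST).compl

theorem measurableSpace_mono {σ τ : StopT F T} (hστ : ∀ ω, σ.t ω ≤ τ.t ω) :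
    σ.isST.measurableSpace ≤ τ.isST.measurableSpace :=
  σ.isST.measurableSpace_mono τ.isST fun ω => WithTop.coe_le_coe.mpr (hστ ω)

def const (c : ℝ) (hc : c ∈ Icc 0 T) : StopT F T :=
  ⟨fun _ => c, isStoppingTime_const F c, fun _ => hc⟩

protected def min (σ τ : StopT F T) : StopT F T where
  t ω := min (σ.t ω) (τ.t ω)
  isST := by simpa only [WithTop.coe_min] using σ.isST.min τ.isST
  mem ω := ⟨le_min (σ.mem ω).1 (τ.mem ω).1, (min_le_left _ _).trans (σ.mem ω).2⟩

open Classical in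
noncomputable def restrict (θ : StopT F T) (s : Set Ω)
    (hs : MeasurableSet[θ.isST.measurableSpace] s) : StopT F T where
  t ω := if ω ∈ s then θ.t ω else T
  isST := by
    simpa only [apply_ite (fun x : ℝ => (x : WithTop ℝ))]
      using θ.isST.ite_const_of_le hs fun ω => WithTop.coe_le_coe.mpr (θ.mem ω).2
  mem ω := by
    split_ifs
    exacts [θ.mem ω, ⟨(θ.mem ω).1.trans (θ.mem ω).2, le_rfl⟩]

section restrict

variable {θ : StopT F T} {s : Set Ω} {hs : MeasurableSet[θ.isST.measurableSpace] s} {ω : Ω}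

theorem restrict_t_of_mem (h : ω ∈ s) : (θ.restrict s hs).t ω = θ.t ω := if_pos h

theorem restrict_t_of_notMem (h : ω ∉ s) : (θ.restrict s hs).t ω = T := if_neg h

theorem restrict_t_pos (hT : 0 < T) (hθ : ∀ ω ∈ s, 0 < θ.t ω) : 0 < (θ.restrict s hs).t ω := by
  by_cases h : ω ∈ s
  · rw [restrict_t_of_mem h]; exact hθ ω h
  · rw [restrict_t_of_notMem h]; exact hT

end restrict

noncomputable def restrictLt (σ θ : StopT F T) : StopT F T :=
  σ.restrict {ω | σ.t ω < θ.t ω} (σ.measurableSet_lt θ)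

theorem restrictLt_t_of_lt {σ θ : StopT F T} {ω : Ω} (h : σ.t ω < θ.t ω) :
    (σ.restrictLt θ).t ω = σ.t ω :=
  restrict_t_of_mem h

theorem restrictLt_t_of_not_lt {σ θ : StopT F T} {ω : Ω} (h : ¬σ.t ω < θ.t ω) :
    (σ.restrictLt θ).t ω = T :=
  restrict_t_of_notMem h

variable {θ : StopT F T} {θs : ℕ → StopT F T}

theorem le_of_monotone_of_tendsto (hmono : ∀ n ω, (θs n).t ω ≤ (θs (n + 1)).t ω)
    (hconv : ∀ ω, Tendsto (fun n => (θs n).t ω) atTop (nhds (θ.t ω))) (n : ℕ) (ω : Ω) :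
    (θs n).t ω ≤ θ.t ω :=
  (monotone_nat_of_le_succ fun k => hmono k ω).ge_of_tendsto (hconv ω) n

theorem measurableSet_forall_lt (hle : ∀ n ω, (θs n).t ω ≤ θ.t ω) :
    MeasurableSet[θ.isST.measurableSpace] {ω | ∀ n, (θs n).t ω < θ.t ω} := by
  simp_rw [Set.ofPred_forall]
  exact .iInter fun n => measurableSpace_mono (hle n) _ ((θs n).measurableSet_lt θ)

theorem restrictLt_le_succ (hmono : ∀ n ω, (θs n).t ω ≤ (θs (n + 1)).t ω) (n : ℕ) (ω : Ω) :
    ((θs n).restrictLt θ).t ω ≤ ((θs (n + 1)).restrictLt θ).t ω := by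
  by_cases h : (θs (n + 1)).t ω < θ.t ω
  · rw [restrictLt_t_of_lt ((hmono n ω).trans_lt h), restrictLt_t_of_lt h]
    exact hmono n ω
  · rw [restrictLt_t_of_not_lt h]
    exact (((θs n).restrictLt θ).mem ω).2

/-- Once the nondecreasing sequence `θₙ(ω)` reaches `θ(ω)` it stays there, so off
`{θₙ < θ for all n}` the times `(θₙ)_{θₙ < θ}` are eventually `T`. -/
theorem tendsto_restrictLt (hmono : ∀ n ω, (θs n).t ω ≤ (θs (n + 1)).t ω)
    (hconv : ∀ ω, Tendsto (fun n => (θs n).t ω) atTop (nhds (θ.t ω)))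
    (hA : MeasurableSet[θ.isST.measurableSpace] {ω | ∀ n, (θs n).t ω < θ.t ω}) (ω : Ω) :
    Tendsto (fun n => ((θs n).restrictLt θ).t ω) atTop
      (nhds ((θ.restrict {ω | ∀ n, (θs n).t ω < θ.t ω} hA).t ω)) := by
  by_cases hω : ω ∈ {ω | ∀ n, (θs n).t ω < θ.t ω}
  · rw [restrict_t_of_mem hω]
    simpa only [restrictLt_t_of_lt (hω _)] using hconv ω
  · rw [restrict_t_of_notMem hω]
    obtain ⟨N, hN⟩ := not_forall.mp hω
    refine tendsto_const_nhds.congr' ?_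
    filter_upwards [eventually_ge_atTop N] with n hn
    refine (restrictLt_t_of_not_lt fun h => hN ?_).symm
    exact ((monotone_nat_of_le_succ fun k => hmono k ω) hn).trans_lt h

end StopT

section

variable {F T}

/-- On `{τ = T}` the announcing sequence is taken from constants `cₙ ↑ T`. -/
theorem predictableStop_of_announced_off_horizon (hT : 0 < T) (τ : StopT F T)
    (ρ : ℕ → StopT F T) (hmono : ∀ n ω, (ρ n).t ω ≤ (ρ (n + 1)).t ω)
    (hconv : ∀ ω, Tendsto (fun n => (ρ n).t ω) atTop (nhds (τ.t ω)))
    (hlt : ∀ n ω, (ρ n).t ω < τ.t ω ∨ τ.t ω = T) : PredictableStop F T τ := by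
  obtain ⟨c, hc_mono, hc_mem, hc_lim⟩ := exists_seq_strictMono_tendsto' hT
  refine ⟨fun n => (ρ n).min (StopT.const (c n) (Ioo_subset_Icc_self (hc_mem n))),
    fun n ω => min_le_min (hmono n ω) (hc_mono n.lt_succ_self).le, fun n ω => ?_, fun ω => ?_⟩
  · rcases hlt n ω with h | h
    · exact (min_le_left _ _).trans_lt h
    · exact (min_le_right _ _).trans_lt ((hc_mem n).2.trans_eq h.symm)
  · have h := (hconv ω).min hc_lim
    rwa [min_eq_left (τ.mem ω).2] at h

theorem predictableStop_restrict_forall_lt (hT : 0 < T) {θ : StopT F T} {θs : ℕ → StopT F T}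
    (hmono : ∀ n ω, (θs n).t ω ≤ (θs (n + 1)).t ω)
    (hconv : ∀ ω, Tendsto (fun n => (θs n).t ω) atTop (nhds (θ.t ω)))
    (hA : MeasurableSet[θ.isST.measurableSpace] {ω | ∀ n, (θs n).t ω < θ.t ω}) :
    PredictableStop F T (θ.restrict {ω | ∀ n, (θs n).t ω < θ.t ω} hA) := by
  refine predictableStop_of_announced_off_horizon hT _ (fun n => (θs n).restrictLt θ)
    (StopT.restrictLt_le_succ hmono) (StopT.tendsto_restrictLt hmono hconv hA) fun n ω => ?_
  by_cases hω : ω ∈ {ω | ∀ n, (θs n).t ω < θ.t ω}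
  · left
    rw [StopT.restrict_t_of_mem hω, StopT.restrictLt_t_of_lt (hω n)]
    exact hω n
  · exact .inr (StopT.restrict_t_of_notMem hω)

end

theorem no_contact_along_increasing_sequences
    (hT : 0 < T)
    (ξ ζ : StopT F T → Ω → ℝ)
    (hξadm : AdmissibleR F T μ ξ) (hζadm : AdmissibleR F T μ ζ)
    (hsep : ∀ τ : StopT F T, PredictableStop F T τ → (∀ᵐ ω ∂μ, 0 < τ.t ω) →
      ∀ᵐ ω ∂μ, ξ τ ω ≠ ζ τ ω)
    (θ : StopT F T) (θs : ℕ → StopT F T)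
    (hmono : ∀ n ω, (θs n).t ω ≤ (θs (n + 1)).t ω)
    (hconv : ∀ ω, Tendsto (fun n => (θs n).t ω) atTop (nhds (θ.t ω))) :
    ∀ᵐ ω ∂μ, ¬(ξ θ ω = ζ θ ω ∧ ∀ n, (θs n).t ω < θ.t ω) := by
  have hA := StopT.measurableSet_forall_lt (StopT.le_of_monotone_of_tendsto hmono hconv)
  set τ := θ.restrict {ω | ∀ n, (θs n).t ω < θ.t ω} hA
  have hpos : ∀ ω, 0 < τ.t ω :=
    fun ω => StopT.restrict_t_pos hT fun ω hω => ((θs 0).mem ω).1.trans_lt (hω 0)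
  filter_upwards [hsep τ (predictableStop_restrict_forall_lt hT hmono hconv hA)
    (ae_of_all μ hpos), hξadm.2 τ θ, hζadm.2 τ θ] with ω hne hξ hζ
  rintro ⟨heq, hω⟩
  have hτθ : τ.t ω = θ.t ω := StopT.restrict_t_of_mem hω
  exact hne ((hξ hτθ).trans (heq.trans (hζ hτθ).symm))
end
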